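/- arXiv:1201.5199 — 3 statements merged into one kernel-verified Lean document; each statement's English description precedes it below -/
import Mathlib

section
/- Let g : Ω → ℝ be bounded and nonnegative, let D = {x ∈ Ω : g(x) > 0}, and assume the non-degeneracy condition g_*(x) > 0 for every x ∈ int D, where g_*(x) = liminf_{y→x} g(y). Let f : ∂Ω → ℝ be Lipschitz continuous, let (p_k) be a sequence of reals with p_k > 4 and p_k → ∞, and for each k let u_k ∈ C(cl Ω) be a viscosity solution of Δ_{p_k} u = g in Ω with u_k = f on ∂Ω. If (u_k) converges uniformly on cl Ω to a function u_∞, then u_∞ is a solution of the gradient constraint problem (GC) for the data (Ω, D, f). -/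
open Metric Set Filter MeasureTheory
open scoped Topology RealInnerProductSpace NNReal

noncomputable section

variable {n : ℕ}

local notation "E" => EuclideanSpace ℝ (Fin n)

/-- The infinity Laplacian Δ∞φ(x) = ⟨D²φ(x) Dφ(x), Dφ(x)⟩. -/
def infLap (φ : E → ℝ) (x : E) : ℝ :=
  inner ℝ ((fderiv ℝ (gradient φ) x) (gradient φ x)) (gradient φ x)

/-- The Laplacian Δφ(x), as the trace of the Hessian. -/
def lap (φ : E → ℝ) (x : E) : ℝ :=
  LinearMap.trace ℝ E (fderiv ℝ (gradient φ) x).toLinearMap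

/-- Δ_pφ(x) = |Dφ(x)|^{p−4} ((p−2) Δ∞φ(x) + |Dφ(x)|² Δφ(x)). -/
def pLap (p : ℝ) (φ : E → ℝ) (x : E) : ℝ :=
  ‖gradient φ x‖ ^ (p - 4) * ((p - 2) * infLap φ x + ‖gradient φ x‖ ^ 2 * lap φ x)

/-- g − φ has a strict local maximum at x relative to s. -/
def IsStrictLocalMaxOn (g : E → ℝ) (s : Set E) (x : E) : Prop :=
  ∃ r > 0, ∀ y ∈ ball x r ∩ s, y ≠ x → g y < g x

def IsStrictLocalMinOn (g : E → ℝ) (s : Set E) (x : E) : Prop :=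
  ∃ r > 0, ∀ y ∈ ball x r ∩ s, y ≠ x → g x < g y

/-- characteristic function of a set -/
def chi (S : Set E) (x : E) : ℝ := S.indicator (fun _ => (1:ℝ)) x

/-- viscosity subsolution of min{Δ∞u, |Du| − χ_D} = 0 in Ω -/
def IsGCsub (Ω D : Set E) (u : E → ℝ) : Prop :=
  ∀ x ∈ Ω, ∀ φ : E → ℝ, ContDiffOn ℝ 2 φ Ω →
    IsStrictLocalMaxOn (fun y => u y - φ y) Ω x →
    0 ≤ infLap φ x ∧ chi (interior D) x ≤ ‖gradient φ x‖

/-- viscosity supersolution of min{Δ∞u, |Du| − χ_D} = 0 in Ω -/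
def IsGCsuper (Ω D : Set E) (u : E → ℝ) : Prop :=
  ∀ x ∈ Ω, ∀ φ : E → ℝ, ContDiffOn ℝ 2 φ Ω →
    IsStrictLocalMinOn (fun y => u y - φ y) Ω x →
    infLap φ x ≤ 0 ∨ ‖gradient φ x‖ ≤ chi (closure D) x

/-- solution of the gradient constraint problem (GC) for the data (Ω, D, f) -/
def IsGCsol (Ω D : Set E) (f u : E → ℝ) : Prop :=
  ContinuousOn u (closure Ω) ∧ IsGCsub Ω D u ∧ IsGCsuper Ω D u ∧
    ∀ x ∈ frontier Ω, u x = f x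

/-- viscosity solution of Jensen's equation min{Δ∞u, |Du| − 1} = 0 in Ω -/
def IsJensenSol (Ω : Set E) (u : E → ℝ) : Prop :=
  (∀ x ∈ Ω, ∀ φ : E → ℝ, ContDiffOn ℝ 2 φ Ω →
    IsStrictLocalMaxOn (fun y => u y - φ y) Ω x →
    0 ≤ infLap φ x ∧ 1 ≤ ‖gradient φ x‖) ∧
  (∀ x ∈ Ω, ∀ φ : E → ℝ, ContDiffOn ℝ 2 φ Ω →
    IsStrictLocalMinOn (fun y => u y - φ y) Ω x →
    infLap φ x ≤ 0 ∨ ‖gradient φ x‖ ≤ 1)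

/-- viscosity solution of Δ∞u = 0 in the open set V -/
def IsInfHarmonic (V : Set E) (u : E → ℝ) : Prop :=
  (∀ x ∈ V, ∀ φ : E → ℝ, ContDiffOn ℝ 2 φ V →
    IsStrictLocalMaxOn (fun y => u y - φ y) V x → 0 ≤ infLap φ x) ∧
  (∀ x ∈ V, ∀ φ : E → ℝ, ContDiffOn ℝ 2 φ V →
    IsStrictLocalMinOn (fun y => u y - φ y) V x → infLap φ x ≤ 0)

/-- viscosity solution of Δ_p u = g in Ω -/
def IsPViscSol (Ω : Set E) (p : ℝ) (g : E → ℝ) (u : E → ℝ) : Prop :=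
  ContinuousOn u Ω ∧
  (∀ x ∈ Ω, ∀ φ : E → ℝ, ContDiffOn ℝ 2 φ Ω →
    IsStrictLocalMaxOn (fun y => u y - φ y) Ω x →
    Filter.liminf g (𝓝[Ω] x) ≤ pLap p φ x) ∧
  (∀ x ∈ Ω, ∀ φ : E → ℝ, ContDiffOn ℝ 2 φ Ω →
    IsStrictLocalMinOn (fun y => u y - φ y) Ω x →
    pLap p φ x ≤ Filter.limsup g (𝓝[Ω] x))

/-- the boundary strip Γ_ε -/
def GammaStrip (Ω : Set E) (ε : ℝ) : Set E :=
  {x | x ∉ Ω ∧ Metric.infDist x (frontier Ω) < ε}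

/-- dynamic programming principle for the D-game -/
def SatisfiesDPP_D (Ω D : Set E) (ε : ℝ) (u : E → ℝ) : Prop :=
  ∀ x ∈ Ω, u x = min ((sSup (u '' closedBall x ε) + sInf (u '' closedBall x ε)) / 2)
      (sSup (u '' closedBall x ε) - ε * chi D x)

/-- dynamic programming principle for the Ω-game -/
def SatisfiesDPP_Om (Ω : Set E) (ε : ℝ) (u : E → ℝ) : Prop :=
  ∀ x ∈ Ω, u x = min ((sSup (u '' closedBall x ε) + sInf (u '' closedBall x ε)) / 2)
      (sSup (u '' closedBall x ε) - ε)

/-- φ ∈ W^{2,∞}_loc(Ω): differentiable with locally Lipschitz gradient on Ω -/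
def W2InfLoc (Ω : Set E) (φ : E → ℝ) : Prop :=
  (∀ x ∈ Ω, DifferentiableAt ℝ φ x) ∧
  ∀ x ∈ Ω, ∃ K : ℝ≥0, ∃ s ∈ 𝓝[Ω] x, LipschitzOnWith K (gradient φ) s

/-- ess limsup_{y→x} F(y) -/
def essLimsupAt (F : E → ℝ) (x : E) : ℝ :=
  ⨅ r ∈ Set.Ioi (0:ℝ), essSup F (volume.restrict (ball x r))

/-- ess liminf_{y→x} F(y) -/
def essLiminfAt (F : E → ℝ) (x : E) : ℝ :=
  ⨆ r ∈ Set.Ioi (0:ℝ), essInf F (volume.restrict (ball x r))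

/-- L∞-viscosity subsolution of min{Δ∞u, |Du| − χ_D} = 0 in Ω -/
def IsLinfGCsub (Ω D : Set E) (u : E → ℝ) : Prop :=
  ∀ x ∈ Ω, ∀ φ : E → ℝ, W2InfLoc Ω φ →
    IsStrictLocalMaxOn (fun y => u y - φ y) Ω x →
    0 ≤ essLimsupAt (fun y => min (infLap φ y) (‖gradient φ y‖ - chi D y)) x

/-- L∞-viscosity supersolution of min{Δ∞u, |Du| − χ_D} = 0 in Ω -/
def IsLinfGCsuper (Ω D : Set E) (u : E → ℝ) : Prop :=
  ∀ x ∈ Ω, ∀ φ : E → ℝ, W2InfLoc Ω φ →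
    IsStrictLocalMinOn (fun y => u y - φ y) Ω x →
    essLiminfAt (fun y => min (infLap φ y) (‖gradient φ y‖ - chi D y)) x ≤ 0

/-- L∞-viscosity solution of Δ_p u = χ_D in Ω -/
def IsLinfPSol (Ω D : Set E) (p : ℝ) (u : E → ℝ) : Prop :=
  ContinuousOn u Ω ∧
  (∀ x ∈ Ω, ∀ φ : E → ℝ, W2InfLoc Ω φ →
    IsStrictLocalMaxOn (fun y => u y - φ y) Ω x →
    0 ≤ essLimsupAt (fun y => pLap p φ y - chi D y) x) ∧
  (∀ x ∈ Ω, ∀ φ : E → ℝ, W2InfLoc Ω φ →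
    IsStrictLocalMinOn (fun y => u y - φ y) Ω x →
    essLiminfAt (fun y => pLap p φ y - chi D y) x ≤ 0)

/-!
If `φ` touches `u∞` strictly from above at `x`, the maximum points `z k` of `u k - φ` converge to
`x`, and since adding `‖y - z k‖ ^ 4` makes the maximum strict without changing `Dφ` and `D²φ` at
`z k`, the equation gives `g_*(z k) ≤ Δ_{p k} φ (z k) = |Dφ|^(p-4) ((p-2) Δ∞φ + |Dφ|² Δφ) (z k)`.
As `p k → ∞` the right side becomes negative if `Δ∞φ(x) < 0 ≠ Dφ(x)`, contradicting `g ≥ 0`, and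
tends to `0` if `|Dφ(x)| < 1`, contradicting the non-degeneracy of `g` on `int D`. At minimum
points, `Δ∞φ(x) > 0` makes the right side blow up if `|Dφ(x)| > 1`, contradicting `g ≤ M`, and
positive if `Dφ(x) ≠ 0`, contradicting `g = 0` away from `cl D`.
-/

def pLapForm (q A I L : ℝ) : ℝ := A ^ (q - 4) * ((q - 2) * I + A ^ 2 * L)

theorem pLap_eq_pLapForm (p : ℝ) (φ : E → ℝ) (x : E) :
    pLap p φ x = pLapForm p ‖gradient φ x‖ (infLap φ x) (lap φ x) := rfl

theorem tendsto_mul_rpow_atTop_nhds_zero {b : ℝ} (hb₀ : 0 < b) (hb₁ : b < 1) :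
    Tendsto (fun t : ℝ => t * b ^ t) atTop (𝓝 0) := by
  have hc : 0 < -Real.log b := neg_pos.2 (Real.log_neg hb₀ hb₁)
  refine (tendsto_rpow_mul_exp_neg_mul_atTop_nhds_zero 1 _ hc).congr fun t => ?_
  rw [Real.rpow_one, Real.rpow_def_of_pos hb₀, neg_neg, mul_comm t]

section pLapForm

variable {q A I L : ℕ → ℝ} {a ι l : ℝ}

theorem tendsto_pLapForm_bracket_atTop (hq : Tendsto q atTop atTop) (hA : Tendsto A atTop (𝓝 a))
    (hI : Tendsto I atTop (𝓝 ι)) (hL : Tendsto L atTop (𝓝 l)) (hι : 0 < ι) :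
    Tendsto (fun k => (q k - 2) * I k + A k ^ 2 * L k) atTop atTop :=
  ((tendsto_atTop_add_const_right _ (-2) hq).atTop_mul_pos hι hI).atTop_add ((hA.pow 2).mul hL)

theorem tendsto_pLapForm_bracket_atBot (hq : Tendsto q atTop atTop) (hA : Tendsto A atTop (𝓝 a))
    (hI : Tendsto I atTop (𝓝 ι)) (hL : Tendsto L atTop (𝓝 l)) (hι : ι < 0) :
    Tendsto (fun k => (q k - 2) * I k + A k ^ 2 * L k) atTop atBot :=
  ((tendsto_atTop_add_const_right _ (-2) hq).atTop_mul_neg hι hI).atBot_add ((hA.pow 2).mul hL)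

theorem eventually_pLapForm_neg (hq : Tendsto q atTop atTop) (hA : Tendsto A atTop (𝓝 a))
    (hI : Tendsto I atTop (𝓝 ι)) (hL : Tendsto L atTop (𝓝 l)) (ha : 0 < a) (hι : ι < 0) :
    ∀ᶠ k in atTop, pLapForm (q k) (A k) (I k) (L k) < 0 := by
  filter_upwards [hA.eventually (lt_mem_nhds ha),
    (tendsto_pLapForm_bracket_atBot hq hA hI hL hι).eventually_lt_atBot 0] with k hAk hk
  exact mul_neg_of_pos_of_neg (Real.rpow_pos_of_pos hAk _) hk

theorem eventually_pLapForm_pos (hq : Tendsto q atTop atTop) (hA : Tendsto A atTop (𝓝 a))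
    (hI : Tendsto I atTop (𝓝 ι)) (hL : Tendsto L atTop (𝓝 l)) (ha : 0 < a) (hι : 0 < ι) :
    ∀ᶠ k in atTop, 0 < pLapForm (q k) (A k) (I k) (L k) := by
  filter_upwards [hA.eventually (lt_mem_nhds ha),
    (tendsto_pLapForm_bracket_atTop hq hA hI hL hι).eventually_gt_atTop 0] with k hAk hk
  exact mul_pos (Real.rpow_pos_of_pos hAk _) hk

theorem tendsto_pLapForm_atTop (hq : Tendsto q atTop atTop) (hA : Tendsto A atTop (𝓝 a))
    (hI : Tendsto I atTop (𝓝 ι)) (hL : Tendsto L atTop (𝓝 l)) (ha : 1 < a) (hι : 0 < ι) :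
    Tendsto (fun k => pLapForm (q k) (A k) (I k) (L k)) atTop atTop := by
  have hT := tendsto_pLapForm_bracket_atTop hq hA hI hL hι
  refine tendsto_atTop_mono' _ ?_ hT
  filter_upwards [hA.eventually (lt_mem_nhds ha), hq.eventually_ge_atTop 4,
    hT.eventually_ge_atTop 0] with k hAk hqk hTk
  exact le_mul_of_one_le_left hTk (Real.one_le_rpow hAk.le (by linarith))

-- The factor `A ^ (q - 4)` decays geometrically in `q`, beating the linear growth of the bracket.
theorem tendsto_pLapForm_zero (hq : Tendsto q atTop atTop) (hA₀ : ∀ k, 0 ≤ A k)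
    (hA : Tendsto A atTop (𝓝 a)) (hI : Tendsto I atTop (𝓝 ι)) (hL : Tendsto L atTop (𝓝 l))
    (ha : a < 1) :
    Tendsto (fun k => pLapForm (q k) (A k) (I k) (L k)) atTop (𝓝 0) := by
  obtain ⟨b, hab, hb₁⟩ := exists_between ha
  have hb₀ : 0 < b := (ge_of_tendsto' hA hA₀).trans_lt hab
  have hs : Tendsto (fun k => q k - 4) atTop atTop := tendsto_atTop_add_const_right _ (-4) hq
  have hpow : ∀ᶠ k in atTop, A k ^ (q k - 4) ≤ b ^ (q k - 4) := by
    filter_upwards [hA.eventually (gt_mem_nhds hab), hq.eventually_ge_atTop 4]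
      with k hAk hqk
    exact Real.rpow_le_rpow (hA₀ k) hAk.le (by linarith)
  have hbpow : Tendsto (fun k => b ^ (q k - 4)) atTop (𝓝 0) :=
    (tendsto_rpow_atTop_of_base_lt_one b (by linarith) hb₁).comp hs
  have hpow₀ : Tendsto (fun k => A k ^ (q k - 4)) atTop (𝓝 0) :=
    squeeze_zero' (.of_forall fun k => Real.rpow_nonneg (hA₀ k) _) hpow hbpow
  have hlin : Tendsto (fun k => (q k - 2) * A k ^ (q k - 4)) atTop (𝓝 0) := by
    have hbound : Tendsto (fun k => (q k - 4) * b ^ (q k - 4) + 2 * b ^ (q k - 4)) atTop (𝓝 0) := by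
      simpa using ((tendsto_mul_rpow_atTop_nhds_zero hb₀ hb₁).comp hs).add (hbpow.const_mul 2)
    refine squeeze_zero' ?_ ?_ hbound
    · filter_upwards [hq.eventually_ge_atTop 4] with k hqk
      exact mul_nonneg (by linarith) (Real.rpow_nonneg (hA₀ k) _)
    · filter_upwards [hpow, hq.eventually_ge_atTop 4] with k hk hqk
      nlinarith
  simpa using ((hlin.mul hI).add (hpow₀.mul ((hA.pow 2).mul hL))).congr fun k => by
    unfold pLapForm; ring

end pLapForm

section LiminfLimsup

variable {X : Type*} [TopologicalSpace X] {s : Set X} {g : X → ℝ} {x : X} {c M : ℝ}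

theorem eventually_le_liminf_nhdsWithin (hM : ∀ y ∈ s, g y ≤ M)
    (h : ∀ᶠ y in 𝓝[s] x, c ≤ g y) : ∀ᶠ y in 𝓝[s] x, c ≤ liminf g (𝓝[s] y) := by
  filter_upwards [eventually_eventually_nhdsWithin.2 h, self_mem_nhdsWithin] with y hy hys
  have : (𝓝[s] y).NeBot := mem_closure_iff_nhdsWithin_neBot.1 (subset_closure hys)
  have hbdd : IsBoundedUnder (· ≤ ·) (𝓝[s] y) g := ⟨M, eventually_mem_nhdsWithin.mono hM⟩
  exact le_liminf_of_le hbdd.isCoboundedUnder_ge hy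

theorem eventually_limsup_nhdsWithin_le (hM : ∀ y ∈ s, M ≤ g y)
    (h : ∀ᶠ y in 𝓝[s] x, g y ≤ c) : ∀ᶠ y in 𝓝[s] x, limsup g (𝓝[s] y) ≤ c := by
  filter_upwards [eventually_eventually_nhdsWithin.2 h, self_mem_nhdsWithin] with y hy hys
  have : (𝓝[s] y).NeBot := mem_closure_iff_nhdsWithin_neBot.1 (subset_closure hys)
  have hbdd : IsBoundedUnder (· ≥ ·) (𝓝[s] y) g := ⟨M, eventually_mem_nhdsWithin.mono hM⟩
  exact limsup_le_of_le hbdd.isCoboundedUnder_le hy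

end LiminfLimsup

theorem exists_seq_isMaxOn_tendsto {X : Type*} [TopologicalSpace X] {K : Set X}
    (hK : IsCompact K) {w : ℕ → X → ℝ} {w' : X → ℝ} (hw : ∀ k, ContinuousOn (w k) K)
    (hconv : TendstoUniformlyOn w w' atTop K) {x : X} (hx : x ∈ K)
    (hmax : ∀ y ∈ K, y ≠ x → w' y < w' x) :
    ∃ z : ℕ → X, (∀ k, z k ∈ K ∧ IsMaxOn (w k) K (z k)) ∧ Tendsto z atTop (𝓝 x) := by
  choose z hzK hzmax using fun k => hK.exists_isMaxOn ⟨x, hx⟩ (hw k)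
  refine ⟨z, fun k => ⟨hzK k, hzmax k⟩, tendsto_nhds.2 fun U hU hxU => ?_⟩
  show ∀ᶠ k in atTop, z k ∈ U
  rcases (K \ U).eq_empty_or_nonempty with hKU | hKU
  · exact Eventually.of_forall fun k => by_contra fun hzU => hKU.subset ⟨hzK k, hzU⟩
  have hw' : ContinuousOn w' K := hconv.continuousOn (.of_forall hw)
  obtain ⟨y, ⟨hyK, hyU⟩, hymax⟩ := (hK.diff hU).exists_isMaxOn hKU (hw'.mono sdiff_subset)
  -- `w' y` is the best value of the limit away from `U`; the gap to `w' x` beats the uniform error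
  have hgap : 0 < w' x - w' y := sub_pos.2 (hmax y hyK fun hyx => hyU (hyx ▸ hxU))
  filter_upwards [Metric.tendstoUniformlyOn_iff.1 hconv _ (half_pos hgap)] with k hk
  by_contra hzU
  have h₁ := hk (z k) (hzK k)
  have h₂ := hk x hx
  have h₃ : w' (z k) ≤ w' y := hymax ⟨hzK k, hzU⟩
  have h₄ : w k x ≤ w k (z k) := hzmax k hx
  rw [Real.dist_eq, abs_lt] at h₁ h₂
  linarith [h₁.1, h₂.2]

theorem exists_seq_isMinOn_tendsto {X : Type*} [TopologicalSpace X] {K : Set X}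
    (hK : IsCompact K) {w : ℕ → X → ℝ} {w' : X → ℝ} (hw : ∀ k, ContinuousOn (w k) K)
    (hconv : TendstoUniformlyOn w w' atTop K) {x : X} (hx : x ∈ K)
    (hmin : ∀ y ∈ K, y ≠ x → w' x < w' y) :
    ∃ z : ℕ → X, (∀ k, z k ∈ K ∧ IsMinOn (w k) K (z k)) ∧ Tendsto z atTop (𝓝 x) := by
  obtain ⟨z, hz, hzx⟩ := exists_seq_isMaxOn_tendsto hK (fun k => (hw k).neg) hconv.fun_neg hx
    fun y hy hyx => neg_lt_neg (hmin y hy hyx)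
  exact ⟨z, fun k => ⟨(hz k).1, fun y hy =>
    show w k (z k) ≤ w k y from neg_le_neg_iff.1 ((hz k).2 hy)⟩, hzx⟩

theorem TendstoUniformlyOn.sub_right {X ι : Type*} {l : Filter ι} {s : Set X} {u : ι → X → ℝ}
    {v : X → ℝ} (h : TendstoUniformlyOn u v l s) (φ : X → ℝ) :
    TendstoUniformlyOn (fun k y => u k y - φ y) (fun y => v y - φ y) l s :=
  Metric.tendstoUniformlyOn_iff.2 fun ε hε => (Metric.tendstoUniformlyOn_iff.1 h ε hε).mono
    fun _ hk y hy => by simpa only [dist_sub_right] using hk y hy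

theorem exists_closedBall_subset_of_ball_inter {X : Type*} [PseudoMetricSpace X] {Ω : Set X}
    {P : X → Prop} {x : X} (hΩ : IsOpen Ω) (hx : x ∈ Ω)
    (hP : ∃ s > 0, ∀ y ∈ ball x s ∩ Ω, y ≠ x → P y) :
    ∃ r > 0, closedBall x r ⊆ Ω ∧ ∀ y ∈ closedBall x r, y ≠ x → P y := by
  obtain ⟨s, hs, hsmax⟩ := hP
  obtain ⟨r, hr, hrs⟩ := Metric.nhds_basis_closedBall.mem_iff.1
    (inter_mem (hΩ.mem_nhds hx) (ball_mem_nhds x hs))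
  exact ⟨r, hr, hrs.trans inter_subset_left, fun y hy => hsmax y ⟨(hrs hy).2, (hrs hy).1⟩⟩

def quartic (a y : E) : ℝ := ‖y - a‖ ^ 4

theorem quartic_eq_sq_norm_sq (a : E) : quartic a = fun y => (‖y - a‖ ^ 2) ^ 2 := by
  ext y; rw [quartic, ← pow_mul]

theorem contDiff_quartic (a : E) : ContDiff ℝ 2 (quartic a) := by
  rw [quartic_eq_sq_norm_sq]
  exact ((contDiff_norm_sq ℝ).comp (contDiff_id.sub contDiff_const)).pow 2

theorem hasGradientAt_quartic (a y : E) :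
    HasGradientAt (quartic a) ((4 * ‖y - a‖ ^ 2) • (y - a)) y := by
  rw [hasGradientAt_iff_hasFDerivAt, quartic_eq_sq_norm_sq]
  refine (((hasFDerivAt_id y).sub_const a).norm_sq.pow 2).congr_fderiv ?_
  ext v
  simp only [id_eq, Nat.add_one_sub_one, pow_one, nsmul_eq_mul, Nat.cast_ofNat, map_sub,
    ContinuousLinearMap.comp_id, smul_apply, sub_apply,
    coe_innerSL_apply, smul_eq_mul, map_smul, InnerProductSpace.toDual_apply_apply]
  ring

theorem gradient_quartic (a : E) : gradient (quartic a) = fun y => (4 * ‖y - a‖ ^ 2) • (y - a) :=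
  gradient_eq (hasGradientAt_quartic a)

theorem hasFDerivAt_gradient_quartic_self (a : E) :
    HasFDerivAt (gradient (quartic a)) (0 : E →L[ℝ] E) a := by
  rw [gradient_quartic]
  refine ((((hasFDerivAt_id a).sub_const a).norm_sq.const_mul 4).fun_smul
    ((hasFDerivAt_id a).sub_const a)).congr_fderiv ?_
  ext v
  simp

theorem ContDiffAt.contDiffAt_gradient {φ : E → ℝ} {x : E} {m k : WithTop ℕ∞}
    (hφ : ContDiffAt ℝ k φ x) (hmk : m + 1 ≤ k) : ContDiffAt ℝ m (gradient φ) x :=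
  (InnerProductSpace.toDual ℝ E).symm.contDiff.comp_contDiffAt x (hφ.fderiv_right hmk)

theorem ContDiffAt.continuousAt_hessian {φ : E → ℝ} {x : E} (hφ : ContDiffAt ℝ 2 φ x) :
    ContinuousAt (fderiv ℝ (gradient φ)) x :=
  ((hφ.contDiffAt_gradient (m := 1) (by norm_num)).fderiv_right (m := 0) le_rfl).continuousAt

theorem ContDiffAt.continuousAt_infLap {φ : E → ℝ} {x : E} (hφ : ContDiffAt ℝ 2 φ x) :
    ContinuousAt (infLap φ) x := by
  have hg := (hφ.contDiffAt_gradient (m := 1) (by norm_num)).continuousAt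
  exact (hφ.continuousAt_hessian.clm_apply hg).inner (𝕜 := ℝ) hg

theorem ContDiffAt.continuousAt_lap {φ : E → ℝ} {x : E} (hφ : ContDiffAt ℝ 2 φ x) :
    ContinuousAt (lap φ) x :=
  ((LinearMap.trace ℝ E).comp (ContinuousLinearMap.coeLM ℝ)).continuous_of_finiteDimensional
    |>.continuousAt.comp hφ.continuousAt_hessian

theorem pLap_add_mul_quartic_self {φ : E → ℝ} {x : E} (hφ : ContDiffAt ℝ 2 φ x) (c p : ℝ) :
    pLap p (fun y => φ y + c * quartic x y) x = pLap p φ x := by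
  have hgrad : gradient (fun y => φ y + c * quartic x y) =ᶠ[𝓝 x]
      fun y => gradient φ y + c • gradient (quartic x) y := by
    filter_upwards [hφ.eventually (by norm_num)] with y hy
    have hφy := (hy.differentiableAt (by norm_num)).hasFDerivAt
    rw [gradient, (hφy.fun_add ((hasGradientAt_quartic x y).hasFDerivAt.const_mul c)).fderiv,
      map_add, map_smul, LinearIsometryEquiv.symm_apply_apply,
      (hasGradientAt_quartic x y).gradient, gradient]
  have hhess :
      fderiv ℝ (gradient (fun y => φ y + c * quartic x y)) x = fderiv ℝ (gradient φ) x := by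
    have hφ' := (hφ.contDiffAt_gradient (m := 1) (by norm_num)).differentiableAt one_ne_zero
    rw [hgrad.fderiv_eq]
    simpa [Pi.add_def, Pi.smul_def] using
      (hφ'.hasFDerivAt.add ((hasFDerivAt_gradient_quartic_self x).const_smul c)).fderiv
  have hgrad_self : gradient (fun y => φ y + c * quartic x y) x = gradient φ x := by
    simp [hgrad.eq_of_nhds, gradient_quartic]
  simp only [pLap, infLap, lap, hgrad_self, hhess]

theorem IsLocalMax.isStrictLocalMaxOn_sub_add_quartic {u φ : E → ℝ} {z : E}
    (h : IsLocalMax (fun y => u y - φ y) z) (s : Set E) :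
    IsStrictLocalMaxOn (fun y => u y - (φ y + 1 * quartic z y)) s z := by
  obtain ⟨r, hr, hball⟩ := Metric.eventually_nhds_iff_ball.1 h
  refine ⟨r, hr, fun y hy hyz => ?_⟩
  have hq : 0 < quartic z y := pow_pos (norm_pos_iff.2 (sub_ne_zero.2 hyz)) 4
  have := hball y hy.1
  simp only [quartic, sub_self, norm_zero] at hq ⊢
  linarith

theorem IsLocalMin.isStrictLocalMinOn_sub_add_quartic {u φ : E → ℝ} {z : E}
    (h : IsLocalMin (fun y => u y - φ y) z) (s : Set E) :
    IsStrictLocalMinOn (fun y => u y - (φ y + (-1) * quartic z y)) s z := by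
  obtain ⟨r, hr, hball⟩ := Metric.eventually_nhds_iff_ball.1 h
  refine ⟨r, hr, fun y hy hyz => ?_⟩
  have hq : 0 < quartic z y := pow_pos (norm_pos_iff.2 (sub_ne_zero.2 hyz)) 4
  have := hball y hy.1
  simp only [quartic, sub_self, norm_zero] at hq ⊢
  linarith

theorem IsPViscSol.liminf_le_pLap_of_isLocalMax {Ω : Set E} {p : ℝ} {g u φ : E → ℝ} {z : E}
    (hu : IsPViscSol Ω p g u) (hΩ : IsOpen Ω) (hφ : ContDiffOn ℝ 2 φ Ω) (hz : z ∈ Ω)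
    (hmax : IsLocalMax (fun y => u y - φ y) z) :
    liminf g (𝓝[Ω] z) ≤ pLap p φ z := by
  rw [← pLap_add_mul_quartic_self (hφ.contDiffAt (hΩ.mem_nhds hz)) 1 p]
  exact hu.2.1 z hz _ (hφ.add (contDiff_const.mul (contDiff_quartic z)).contDiffOn)
    (hmax.isStrictLocalMaxOn_sub_add_quartic Ω)

theorem IsPViscSol.pLap_le_limsup_of_isLocalMin {Ω : Set E} {p : ℝ} {g u φ : E → ℝ} {z : E}
    (hu : IsPViscSol Ω p g u) (hΩ : IsOpen Ω) (hφ : ContDiffOn ℝ 2 φ Ω) (hz : z ∈ Ω)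
    (hmin : IsLocalMin (fun y => u y - φ y) z) :
    pLap p φ z ≤ limsup g (𝓝[Ω] z) := by
  rw [← pLap_add_mul_quartic_self (hφ.contDiffAt (hΩ.mem_nhds hz)) (-1) p]
  exact hu.2.2 z hz _ (hφ.add (contDiff_const.mul (contDiff_quartic z)).contDiffOn)
    (hmin.isStrictLocalMinOn_sub_add_quartic Ω)

theorem exists_seq_liminf_le_pLap {Ω : Set E} {p : ℕ → ℝ} {g : E → ℝ} {u : ℕ → E → ℝ}
    {v φ : E → ℝ} (hΩ : IsOpen Ω) (hu : ∀ k, IsPViscSol Ω (p k) g (u k))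
    (hconv : TendstoLocallyUniformlyOn u v atTop Ω) (hφ : ContDiffOn ℝ 2 φ Ω) {x : E}
    (hx : x ∈ Ω) (hmax : IsStrictLocalMaxOn (fun y => v y - φ y) Ω x) :
    ∃ z : ℕ → E, Tendsto z atTop (𝓝[Ω] x) ∧
      ∀ᶠ k in atTop, liminf g (𝓝[Ω] (z k)) ≤ pLap (p k) φ (z k) := by
  obtain ⟨r, hr, hrΩ, hrmax⟩ := exists_closedBall_subset_of_ball_inter hΩ hx hmax
  have hK := isCompact_closedBall x r
  obtain ⟨z, hz, hzx⟩ := exists_seq_isMaxOn_tendsto hK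
    (fun k => ((hu k).1.sub hφ.continuousOn).mono hrΩ)
    (((tendstoLocallyUniformlyOn_iff_forall_isCompact hΩ).1 hconv _ hrΩ hK).sub_right φ)
    (mem_closedBall_self hr.le) hrmax
  refine ⟨z, tendsto_nhdsWithin_iff.2 ⟨hzx, .of_forall fun k => hrΩ (hz k).1⟩, ?_⟩
  filter_upwards [hzx (ball_mem_nhds x hr)] with k hk
  exact (hu k).liminf_le_pLap_of_isLocalMax hΩ hφ (hrΩ (hz k).1)
    ((hz k).2.isLocalMax (closedBall_mem_nhds_of_mem hk))

theorem exists_seq_pLap_le_limsup {Ω : Set E} {p : ℕ → ℝ} {g : E → ℝ} {u : ℕ → E → ℝ}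
    {v φ : E → ℝ} (hΩ : IsOpen Ω) (hu : ∀ k, IsPViscSol Ω (p k) g (u k))
    (hconv : TendstoLocallyUniformlyOn u v atTop Ω) (hφ : ContDiffOn ℝ 2 φ Ω) {x : E}
    (hx : x ∈ Ω) (hmin : IsStrictLocalMinOn (fun y => v y - φ y) Ω x) :
    ∃ z : ℕ → E, Tendsto z atTop (𝓝[Ω] x) ∧
      ∀ᶠ k in atTop, pLap (p k) φ (z k) ≤ limsup g (𝓝[Ω] (z k)) := by
  obtain ⟨r, hr, hrΩ, hrmin⟩ := exists_closedBall_subset_of_ball_inter hΩ hx hmin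
  have hK := isCompact_closedBall x r
  obtain ⟨z, hz, hzx⟩ := exists_seq_isMinOn_tendsto hK
    (fun k => ((hu k).1.sub hφ.continuousOn).mono hrΩ)
    (((tendstoLocallyUniformlyOn_iff_forall_isCompact hΩ).1 hconv _ hrΩ hK).sub_right φ)
    (mem_closedBall_self hr.le) hrmin
  refine ⟨z, tendsto_nhdsWithin_iff.2 ⟨hzx, .of_forall fun k => hrΩ (hz k).1⟩, ?_⟩
  filter_upwards [hzx (ball_mem_nhds x hr)] with k hk
  exact (hu k).pLap_le_limsup_of_isLocalMin hΩ hφ (hrΩ (hz k).1)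
    ((hz k).2.isLocalMin (closedBall_mem_nhds_of_mem hk))

theorem ContDiffAt.tendsto_gradient_infLap_lap {φ : E → ℝ} {x : E} (hφ : ContDiffAt ℝ 2 φ x)
    {z : ℕ → E} (hz : Tendsto z atTop (𝓝 x)) :
    Tendsto (fun k => ‖gradient φ (z k)‖) atTop (𝓝 ‖gradient φ x‖) ∧
      Tendsto (fun k => infLap φ (z k)) atTop (𝓝 (infLap φ x)) ∧
      Tendsto (fun k => lap φ (z k)) atTop (𝓝 (lap φ x)) :=
  ⟨((hφ.contDiffAt_gradient (m := 1) (by norm_num)).continuousAt.tendsto.comp hz).norm,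
    hφ.continuousAt_infLap.tendsto.comp hz, hφ.continuousAt_lap.tendsto.comp hz⟩

theorem isGCsub_of_tendstoLocallyUniformlyOn {Ω D : Set E} {g : E → ℝ} {M : ℝ} {p : ℕ → ℝ}
    {u : ℕ → E → ℝ} {v : E → ℝ} (hΩ : IsOpen Ω) (hg₀ : ∀ y ∈ Ω, 0 ≤ g y)
    (hgM : ∀ y ∈ Ω, g y ≤ M) (hnondeg : ∀ x ∈ interior D, 0 < liminf g (𝓝[Ω] x))
    (hp : Tendsto p atTop atTop) (hu : ∀ k, IsPViscSol Ω (p k) g (u k))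
    (hconv : TendstoLocallyUniformlyOn u v atTop Ω) : IsGCsub Ω D v := by
  intro x hx φ hφ hmax
  obtain ⟨z, hzx, hz⟩ := exists_seq_liminf_le_pLap hΩ hu hconv hφ hx hmax
  obtain ⟨hA, hI, hL⟩ :=
    (hφ.contDiffAt (hΩ.mem_nhds hx)).tendsto_gradient_infLap_lap (tendsto_nhdsWithin_iff.1 hzx).1
  simp only [pLap_eq_pLapForm] at hz
  constructor
  · by_contra! hneg
    have hgrad : 0 < ‖gradient φ x‖ := norm_pos_iff.2 fun h₀ => by simp [infLap, h₀] at hneg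
    have hg : ∀ᶠ k in atTop, 0 ≤ liminf g (𝓝[Ω] (z k)) :=
      hzx.eventually (eventually_le_liminf_nhdsWithin hgM (eventually_mem_nhdsWithin.mono hg₀))
    obtain ⟨k, hk, hgk, hneg⟩ :=
      (hz.and (hg.and (eventually_pLapForm_neg hp hA hI hL hgrad hneg))).exists
    linarith
  · by_cases hxD : x ∈ interior D
    · rw [chi, indicator_of_mem hxD]
      by_contra! hlt
      set c := liminf g (𝓝[Ω] x)
      have hc : 0 < c := hnondeg x hxD
      have hgc : ∀ᶠ y in 𝓝[Ω] x, c / 2 ≤ g y :=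
        (eventually_lt_of_lt_liminf (half_lt_self hc) ⟨0, eventually_mem_nhdsWithin.mono hg₀⟩).mono
          fun _ => le_of_lt
      have hg : ∀ᶠ k in atTop, c / 2 ≤ liminf g (𝓝[Ω] (z k)) :=
        hzx.eventually (eventually_le_liminf_nhdsWithin hgM hgc)
      obtain ⟨k, hk, hgk, hsmall⟩ := (hz.and (hg.and ((tendsto_pLapForm_zero hp
        (fun _ => norm_nonneg _) hA hI hL hlt).eventually (gt_mem_nhds (half_pos hc))))).exists
      linarith
    · rw [chi, indicator_of_notMem hxD]
      exact norm_nonneg _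

theorem isGCsuper_of_tendstoLocallyUniformlyOn {Ω D : Set E} {g : E → ℝ} {M : ℝ} {p : ℕ → ℝ}
    {u : ℕ → E → ℝ} {v : E → ℝ} (hΩ : IsOpen Ω) (hg₀ : ∀ y ∈ Ω, 0 ≤ g y)
    (hgM : ∀ y ∈ Ω, g y ≤ M) (hgD : ∀ y ∈ Ω, y ∉ D → g y ≤ 0)
    (hp : Tendsto p atTop atTop) (hu : ∀ k, IsPViscSol Ω (p k) g (u k))
    (hconv : TendstoLocallyUniformlyOn u v atTop Ω) : IsGCsuper Ω D v := by
  intro x hx φ hφ hmin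
  obtain ⟨z, hzx, hz⟩ := exists_seq_pLap_le_limsup hΩ hu hconv hφ hx hmin
  obtain ⟨hA, hI, hL⟩ :=
    (hφ.contDiffAt (hΩ.mem_nhds hx)).tendsto_gradient_infLap_lap (tendsto_nhdsWithin_iff.1 hzx).1
  simp only [pLap_eq_pLapForm] at hz
  rcases le_or_gt (infLap φ x) 0 with hneg | hpos
  · exact Or.inl hneg
  right
  by_cases hxD : x ∈ closure D
  · rw [chi, indicator_of_mem hxD]
    by_contra! hgt
    have hg : ∀ᶠ k in atTop, limsup g (𝓝[Ω] (z k)) ≤ M :=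
      hzx.eventually (eventually_limsup_nhdsWithin_le hg₀ (eventually_mem_nhdsWithin.mono hgM))
    obtain ⟨k, hk, hgk, hbig⟩ := (hz.and (hg.and
      ((tendsto_pLapForm_atTop hp hA hI hL hgt hpos).eventually_gt_atTop M))).exists
    linarith
  · rw [chi, indicator_of_notMem hxD]
    by_contra! hgt
    -- near `x` we are away from `D`, where `g` vanishes
    have hg₀x : ∀ᶠ y in 𝓝[Ω] x, g y ≤ 0 := by
      filter_upwards [mem_nhdsWithin_of_mem_nhds (isClosed_closure.isOpen_compl.mem_nhds hxD),
        self_mem_nhdsWithin] with y hyD hyΩ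
      exact hgD y hyΩ fun h => hyD (subset_closure h)
    have hg : ∀ᶠ k in atTop, limsup g (𝓝[Ω] (z k)) ≤ 0 :=
      hzx.eventually (eventually_limsup_nhdsWithin_le hg₀ hg₀x)
    obtain ⟨k, hk, hgk, hpos⟩ :=
      (hz.and (hg.and (eventually_pLapForm_pos hp hA hI hL hgt hpos))).exists
    linarith

theorem stmt_0_general (Ω D : Set E) (hΩo : IsOpen Ω)
    (g : E → ℝ) (M : ℝ) (hgbd : ∀ x ∈ Ω, |g x| ≤ M) (hgnn : ∀ x ∈ Ω, 0 ≤ g x)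
    (hDdef : D = {x ∈ Ω | 0 < g x})
    (hnondeg : ∀ x ∈ interior D, 0 < Filter.liminf g (𝓝[Ω] x))
    (f : E → ℝ)
    (p : ℕ → ℝ) (hp : Tendsto p atTop atTop)
    (u : ℕ → E → ℝ) (hucont : ∀ k, ContinuousOn (u k) (closure Ω))
    (husol : ∀ k, IsPViscSol Ω (p k) g (u k))
    (hubdry : ∀ k, ∀ x ∈ frontier Ω, u k x = f x)
    (uinf : E → ℝ) (hconv : TendstoUniformlyOn u uinf atTop (closure Ω)) :
    IsGCsol Ω D f uinf := by
  have hgM : ∀ x ∈ Ω, g x ≤ M := fun x hx => (abs_le.1 (hgbd x hx)).2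
  have hgD : ∀ x ∈ Ω, x ∉ D → g x ≤ 0 := fun x hx hxD =>
    not_lt.1 fun hpos => hxD (hDdef ▸ ⟨hx, hpos⟩)
  have hconvΩ : TendstoLocallyUniformlyOn u uinf atTop Ω :=
    (hconv.mono subset_closure).tendstoLocallyUniformlyOn
  refine ⟨hconv.continuousOn (.of_forall hucont),
    isGCsub_of_tendstoLocallyUniformlyOn hΩo hgnn hgM hnondeg hp husol hconvΩ,
    isGCsuper_of_tendstoLocallyUniformlyOn hΩo hgnn hgM hgD hp husol hconvΩ, fun x hx => ?_⟩
  exact tendsto_nhds_unique (hconv.tendsto_at (frontier_subset_closure hx))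
    (tendsto_const_nhds.congr fun k => (hubdry k x hx).symm)

/-- uniform limits of viscosity solutions of Δ_{p_k} u = g with boundary data f
solve the gradient constraint problem for (Ω, D, f), D = {g > 0}. -/
theorem stmt_0 (hn : 1 ≤ n) (Ω D : Set E) (hΩo : IsOpen Ω) (hΩne : Ω.Nonempty)
    (hΩb : Bornology.IsBounded Ω)
    (g : E → ℝ) (M : ℝ) (hgbd : ∀ x ∈ Ω, |g x| ≤ M) (hgnn : ∀ x ∈ Ω, 0 ≤ g x)
    (hDdef : D = {x ∈ Ω | 0 < g x})
    (hnondeg : ∀ x ∈ interior D, 0 < Filter.liminf g (𝓝[Ω] x))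
    (f : E → ℝ) (K : ℝ≥0) (hf : LipschitzOnWith K f (frontier Ω))
    (p : ℕ → ℝ) (hp4 : ∀ k, 4 < p k) (hp : Tendsto p atTop atTop)
    (u : ℕ → E → ℝ) (hucont : ∀ k, ContinuousOn (u k) (closure Ω))
    (husol : ∀ k, IsPViscSol Ω (p k) g (u k))
    (hubdry : ∀ k, ∀ x ∈ frontier Ω, u k x = f x)
    (uinf : E → ℝ) (hconv : TendstoUniformlyOn u uinf atTop (closure Ω)) :
    IsGCsol Ω D f uinf :=
  stmt_0_general Ω D hΩo g M hgbd hgnn hDdef hnondeg f p hp u hucont husol hubdry uinf hconv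

end
end

section
/- Suppose that int D = ∅ and that f : ∂Ω → ℝ is Lipschitz continuous with Lipschitz constant L ≤ 1. Let α ∈ [L, 1] and let v ∈ C(cl Ω) satisfy: v is infinity harmonic in Ω \ cl D, v = f on ∂Ω, and v(x) = sup_{y ∈ ∂Ω} ( f(y) − α|x − y| ) for every x ∈ cl D. Then v is a solution of the gradient constraint problem (GC) for the data (Ω, D, f). -/
open Metric Set Filter MeasureTheory
open scoped Topology RealInnerProductSpace NNReal

noncomputable section

variable {n : ℕ}

local notation "E" => EuclideanSpace ℝ (Fin n)

/-!
Put `w x = sup_{y ∈ ∂Ω} (f y - α |x - y|)`. Since `Lip f ≤ α`, `w = f` on `∂Ω`, so `v = w` on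
`∂Ω ∪ closure D`, which contains the boundary of `U = Ω \ closure D`. Away from `closure D` the
equation is `Δ∞ v = 0` (the gradient constraint is void because `int D = ∅`). In `U`, `v` is
infinity harmonic and hence enjoys comparison with cones; this gives `w ≤ v` in `Ω` and
`v z ≤ v x + α |z - x|` for `x ∈ closure D`. At `x ∈ closure D` the first inequality says that the
cone `f y₀ - α |z - y₀|` realizing `w x` touches `v` from below, and a cone has zero second
derivative along its own gradient, so `Δ∞ φ(x) ≥ 0` for every `φ` touching `v` from above. The
second inequality gives `|Dφ(x)| ≤ α ≤ 1` for every `φ` touching `v` from below.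
-/

theorem IsLocalMin.deriv_deriv_nonneg {g : ℝ → ℝ} {t : ℝ} (h : IsLocalMin g t)
    (hc : ContinuousAt g t) : 0 ≤ deriv (deriv g) t := by
  by_contra! hneg
  have hmax : IsLocalMax g t := isLocalMax_of_deriv_deriv_neg hneg h.deriv_eq_zero hc
  have hconst : g =ᶠ[𝓝 t] fun _ => g t := (h.and hmax).mono fun _ hs => le_antisymm hs.2 hs.1
  rw [hconst.deriv.deriv_eq] at hneg
  simp at hneg

section Gradient

variable {F : Type*} [NormedAddCommGroup F] [InnerProductSpace ℝ F] [CompleteSpace F]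
  {f g : F → ℝ} {f' g' x y : F} {α : ℝ}

theorem HasGradientAt.add (hf : HasGradientAt f f' x) (hg : HasGradientAt g g' x) :
    HasGradientAt (fun z => f z + g z) (f' + g') x := by
  rw [hasGradientAt_iff_hasFDerivAt, map_add]
  exact (hasGradientAt_iff_hasFDerivAt.mp hf).add (hasGradientAt_iff_hasFDerivAt.mp hg)

theorem HasGradientAt.sub (hf : HasGradientAt f f' x) (hg : HasGradientAt g g' x) :
    HasGradientAt (fun z => f z - g z) (f' - g') x := by
  rw [hasGradientAt_iff_hasFDerivAt, map_sub]
  exact (hasGradientAt_iff_hasFDerivAt.mp hf).sub (hasGradientAt_iff_hasFDerivAt.mp hg)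

theorem HasGradientAt.const_mul (hf : HasGradientAt f f' x) (c : ℝ) :
    HasGradientAt (fun z => c * f z) (c • f') x := by
  rw [hasGradientAt_iff_hasFDerivAt, map_smul]
  exact (hasGradientAt_iff_hasFDerivAt.mp hf).const_mul c

theorem HasGradientAt.const_add (hf : HasGradientAt f f' x) (c : ℝ) :
    HasGradientAt (fun z => c + f z) f' x :=
  hasGradientAt_iff_hasFDerivAt.mpr ((hasGradientAt_iff_hasFDerivAt.mp hf).const_add c)

theorem hasGradientAt_norm_sub_sq (y x : F) :
    HasGradientAt (fun z => ‖z - y‖ ^ 2) ((2 : ℝ) • (x - y)) x := by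
  rw [hasGradientAt_iff_hasFDerivAt]
  refine ((hasFDerivAt_id x).sub_const y).norm_sq.congr_fderiv ?_
  ext w
  simp

theorem hasGradientAt_norm_sub (h : x ≠ y) :
    HasGradientAt (fun z => ‖z - y‖) (‖x - y‖⁻¹ • (x - y)) x := by
  have hxy : ‖x - y‖ ≠ 0 := norm_ne_zero_iff.mpr (sub_ne_zero.mpr h)
  have hsqrt := (hasGradientAt_iff_hasFDerivAt.mp (hasGradientAt_norm_sub_sq y x)).sqrt
    (pow_ne_zero 2 hxy)
  simp only [Real.sqrt_sq (norm_nonneg _)] at hsqrt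
  rw [hasGradientAt_iff_hasFDerivAt]
  refine hsqrt.congr_fderiv ?_
  ext w
  simp
  field_simp

theorem ContDiffAt.differentiableAt_gradient (h : ContDiffAt ℝ 2 f x) :
    DifferentiableAt ℝ (gradient f) x :=
  (InnerProductSpace.toDual ℝ F).symm.toContinuousLinearEquiv.differentiableAt.comp x
    ((h.fderiv_right (m := 1) (by norm_num)).differentiableAt (by norm_num))

theorem ContDiffAt.eventually_hasGradientAt (h : ContDiffAt ℝ 2 f x) :
    ∀ᶠ z in 𝓝 x, HasGradientAt f (gradient f z) z :=
  (h.eventually (by simp)).mono fun _ hz => (hz.differentiableAt (by norm_num)).hasGradientAt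

theorem IsLocalMin.gradient_eq_zero (h : IsLocalMin f x) : gradient f x = 0 := by
  simp [gradient, h.fderiv_eq_zero]

theorem IsLocalMin.inner_fderiv_gradient_nonneg (h : IsLocalMin f x) (hf : ContDiffAt ℝ 2 f x)
    (v : F) : 0 ≤ ⟪fderiv ℝ (gradient f) x v, v⟫ := by
  set γ : ℝ → F := fun t => x + t • v
  have hγ : ∀ t, HasDerivAt γ v t := fun t =>
    (((hasDerivAt_id t).smul_const v).const_add x).congr_deriv (one_smul ℝ v)
  have hγ0 : γ 0 = x := by simp [γ]
  have hγx : Tendsto γ (𝓝 0) (𝓝 x) := hγ0 ▸ (hγ 0).continuousAt.tendsto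
  have hmin : IsLocalMin (f ∘ γ) 0 := (hγ0 ▸ h).comp_continuous (hγ 0).continuousAt
  have hderiv : deriv (f ∘ γ) =ᶠ[𝓝 0] fun t => ⟪gradient f (γ t), v⟫ :=
    (hγx.eventually hf.eventually_hasGradientAt).mono fun t ht => by
      rw [((hasGradientAt_iff_hasFDerivAt.mp ht).comp_hasDerivAt t (hγ t)).deriv,
        InnerProductSpace.toDual_apply_apply]
  have hsecond :
      HasDerivAt (fun t => ⟪gradient f (γ t), v⟫) ⟪fderiv ℝ (gradient f) x v, v⟫ 0 := by
    have := ((hγ0 ▸ hf.differentiableAt_gradient.hasFDerivAt).comp_hasDerivAt 0 (hγ 0)).inner ℝ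
      (hasDerivAt_const 0 v)
    simpa [hγ0] using this
  have := hmin.deriv_deriv_nonneg ((hγ0 ▸ hf.continuousAt).comp (hγ 0).continuousAt)
  rwa [hderiv.deriv_eq, hsecond.deriv] at this

-- The unit radial field is constant on rays from `y`; this is why cones have `Δ∞ = 0`.
theorem exists_hasFDerivAt_unitRadial (h : x ≠ y) :
    ∃ B : F →L[ℝ] F, HasFDerivAt (fun z => ‖z - y‖⁻¹ • (z - y)) B x ∧ B (x - y) = 0 := by
  have hr : ‖x - y‖ ≠ 0 := norm_ne_zero_iff.mpr (sub_ne_zero.mpr h)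
  refine ⟨_, ((hasDerivAt_inv hr).comp_hasFDerivAt x
    (hasGradientAt_iff_hasFDerivAt.mp (hasGradientAt_norm_sub h))).smul
    ((hasFDerivAt_id x).sub_const y), ?_⟩
  simp [← inner_sub_left]
  field_simp
  exact add_neg_cancel _

theorem inner_gradient_le_of_sub_le (hf : DifferentiableAt ℝ f x)
    (hb : ∀ᶠ z in 𝓝 x, f z - f x ≤ α * ‖z - x‖) (v : F) :
    ⟪gradient f x, v⟫ ≤ α * ‖v‖ := by
  set g : ℝ → ℝ := fun t => f (x + t • v) - t * (α * ‖v‖)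
  have hγ : HasDerivAt (fun t : ℝ => x + t • v) v 0 :=
    (((hasDerivAt_id 0).smul_const v).const_add x).congr_deriv (one_smul ℝ v)
  have hg : HasDerivAt g (⟪gradient f x, v⟫ - α * ‖v‖) 0 := by
    have hfx : HasFDerivAt f (InnerProductSpace.toDual ℝ F (gradient f x)) (x + (0 : ℝ) • v) := by
      simpa using hasGradientAt_iff_hasFDerivAt.mp hf.hasGradientAt
    exact ((hfx.comp_hasDerivAt 0 hγ).sub ((hasDerivAt_id 0).mul_const (α * ‖v‖))).congr_deriv
      (by simp)
  have hmax : IsLocalMaxOn g (Ici 0) 0 := by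
    have : Tendsto (fun t : ℝ => x + t • v) (𝓝 0) (𝓝 x) := by simpa using hγ.continuousAt.tendsto
    filter_upwards [nhdsWithin_le_nhds (this.eventually hb), self_mem_nhdsWithin] with t ht ht0
    rw [add_sub_cancel_left, norm_smul, Real.norm_of_nonneg (mem_Ici.mp ht0)] at ht
    simp only [g, zero_smul, add_zero, zero_mul, sub_zero]
    linarith
  have := hmax.hasFDerivWithinAt_nonpos (y := 1) hg.hasFDerivAt.hasFDerivWithinAt
    (mem_posTangentConeAt_of_segment_subset (by
      rw [zero_add, segment_eq_Icc zero_le_one]; exact Icc_subset_Ici_self))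
  simpa using this

theorem norm_gradient_le_of_sub_le (hα : 0 ≤ α) (hf : DifferentiableAt ℝ f x)
    (hb : ∀ᶠ z in 𝓝 x, f z - f x ≤ α * ‖z - x‖) : ‖gradient f x‖ ≤ α := by
  have h := inner_gradient_le_of_sub_le hf hb (gradient f x)
  rw [real_inner_self_eq_norm_sq] at h
  rcases (norm_nonneg (gradient f x)).eq_or_lt with h0 | hpos
  · rw [← h0]; exact hα
  · nlinarith

end Gradient

theorem infLap_eq_of_hasFDerivAt {φ : E → ℝ} {G : E → E} {B : E →L[ℝ] E} {x : E}
    (hG : gradient φ =ᶠ[𝓝 x] G) (hB : HasFDerivAt G B x) : infLap φ x = ⟪B (G x), G x⟫ := by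
  rw [infLap, hG.fderiv_eq, hB.fderiv, hG.eq_of_nhds]

theorem infLap_radialQuadratic {x y : E} (h : x ≠ y) (c a b e : ℝ) :
    infLap (fun z => c + a * ‖z - y‖ + b * ‖z - y‖ ^ 2 + e * ‖z - x‖ ^ 2) x
      = (2 * b + 2 * e) * (a + 2 * b * ‖x - y‖) ^ 2 := by
  obtain ⟨B, hB, hBx⟩ := exists_hasFDerivAt_unitRadial h
  have hG : gradient (fun z => c + a * ‖z - y‖ + b * ‖z - y‖ ^ 2 + e * ‖z - x‖ ^ 2)
      =ᶠ[𝓝 x] fun z => a • (‖z - y‖⁻¹ • (z - y)) + b • ((2 : ℝ) • (z - y))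
        + e • ((2 : ℝ) • (z - x)) :=
    (eventually_ne_nhds h).mono fun z hz =>
      ((((hasGradientAt_norm_sub hz).const_mul a).const_add c).add
        ((hasGradientAt_norm_sub_sq y z).const_mul b) |>.add
        ((hasGradientAt_norm_sub_sq x z).const_mul e)).gradient
  have hline : ∀ w : E,
      HasFDerivAt (fun z : E => (2 : ℝ) • (z - w)) ((2 : ℝ) • ContinuousLinearMap.id ℝ E) x :=
    fun w => ((hasFDerivAt_id x).sub_const w).const_smul (2 : ℝ)
  rw [infLap_eq_of_hasFDerivAt hG (((hB.const_smul a).add ((hline y).const_smul b)).add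
    ((hline x).const_smul e))]
  have hr : ‖x - y‖ ≠ 0 := norm_ne_zero_iff.mpr (sub_ne_zero.mpr h)
  simp [hBx, inner_add_left, inner_add_right, real_inner_smul_left, real_inner_smul_right]
  field_simp

theorem infLap_cone {x y : E} (h : x ≠ y) (c a : ℝ) :
    infLap (fun z => c + a * ‖z - y‖) x = 0 := by
  simpa using infLap_radialQuadratic h c a 0 0

theorem contDiffAt_radialQuadratic {x y z : E} (h : z ≠ y) (c a b e : ℝ) :
    ContDiffAt ℝ 2 (fun w => c + a * ‖w - y‖ + b * ‖w - y‖ ^ 2 + e * ‖w - x‖ ^ 2) z := by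
  have hsub : ∀ p : E, ContDiffAt ℝ 2 (fun w : E => w - p) z := fun p =>
    (contDiff_id.sub contDiff_const).contDiffAt
  exact ((contDiffAt_const.add (contDiffAt_const.mul ((hsub y).norm ℝ (sub_ne_zero.mpr h)))).add
    (contDiffAt_const.mul ((hsub y).norm_sq ℝ))).add (contDiffAt_const.mul ((hsub x).norm_sq ℝ))

theorem infLap_neg (φ : E → ℝ) (x : E) : infLap (fun z => -φ z) x = -infLap φ x := by
  have h : gradient (fun z => -φ z) = fun z => -gradient φ z := by
    funext z
    simp [gradient, fderiv_fun_neg]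
  simp [infLap, h, fderiv_fun_neg]

theorem infLap_le_of_isLocalMin_sub {φ C : E → ℝ} {x : E} (hφ : ContDiffAt ℝ 2 φ x)
    (hC : ContDiffAt ℝ 2 C x) (hmin : IsLocalMin (fun z => φ z - C z) x) :
    infLap C x ≤ infLap φ x := by
  have hgrad : gradient (fun z => φ z - C z) =ᶠ[𝓝 x] fun z => gradient φ z - gradient C z :=
    (hφ.eventually_hasGradientAt.and hC.eventually_hasGradientAt).mono fun z hz =>
      (hz.1.sub hz.2).gradient
  have hp : gradient C x = gradient φ x :=
    (sub_eq_zero.mp (hgrad.eq_of_nhds ▸ hmin.gradient_eq_zero)).symm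
  have hsecond := hmin.inner_fderiv_gradient_nonneg (hφ.sub hC) (gradient φ x)
  rw [hgrad.fderiv_eq, fderiv_fun_sub hφ.differentiableAt_gradient hC.differentiableAt_gradient,
    sub_apply, inner_sub_left] at hsecond
  rw [infLap, infLap, hp]
  linarith

section ConeSup

variable {X : Type*} [PseudoMetricSpace X]

-- For `f` `α`-Lipschitz on `K`, this is the least `α`-Lipschitz extension of `f` from `K`.
def coneSup (K : Set X) (f : X → ℝ) (α : ℝ) (x : X) : ℝ :=
  sSup ((fun y => f y - α * dist x y) '' K)

variable {K : Set X} {f : X → ℝ} {α : ℝ}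

theorem continuousOn_cone (hf : ContinuousOn f K) (x : X) :
    ContinuousOn (fun y => f y - α * dist x y) K :=
  hf.sub (continuous_const.mul (continuous_const.dist continuous_id)).continuousOn

theorem le_coneSup (hK : IsCompact K) (hf : ContinuousOn f K) {x y : X} (hy : y ∈ K) :
    f y - α * dist x y ≤ coneSup K f α x :=
  le_csSup (hK.bddAbove_image (continuousOn_cone hf x)) (mem_image_of_mem _ hy)

theorem coneSup_le (hK : K.Nonempty) {x : X} {M : ℝ} (h : ∀ y ∈ K, f y - α * dist x y ≤ M) :
    coneSup K f α x ≤ M :=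
  csSup_le (hK.image _) (forall_mem_image.2 h)

theorem exists_coneSup_eq (hK : IsCompact K) (hne : K.Nonempty) (hf : ContinuousOn f K) (x : X) :
    ∃ y ∈ K, coneSup K f α x = f y - α * dist x y := by
  obtain ⟨y, hy, hmax⟩ := hK.exists_isMaxOn hne (continuousOn_cone (α := α) hf x)
  exact ⟨y, hy, le_antisymm (coneSup_le hne hmax) (le_coneSup hK hf hy)⟩

theorem coneSup_le_add (hK : IsCompact K) (hne : K.Nonempty) (hf : ContinuousOn f K)
    (hα : 0 ≤ α) (x z : X) : coneSup K f α z ≤ coneSup K f α x + α * dist z x :=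
  coneSup_le hne fun y hy => by
    have hx := le_coneSup (α := α) hK hf (x := x) hy
    have htri : dist x y ≤ dist z x + dist z y := dist_comm z x ▸ dist_triangle x z y
    nlinarith

theorem coneSup_eq_of_mem (hf : LipschitzOnWith (Real.toNNReal α) f K) (hα : 0 ≤ α) {x : X}
    (hx : x ∈ K) : coneSup K f α x = f x := by
  refine IsGreatest.csSup_eq ⟨⟨x, hx, by simp⟩, forall_mem_image.2 fun y hy => ?_⟩
  have h := hf.dist_le_mul x hx y hy
  rw [Real.coe_toNNReal α hα, Real.dist_eq] at h
  linarith [neg_abs_le (f x - f y)]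

end ConeSup

theorem frontier_sdiff_subset {X : Type*} [TopologicalSpace X] (s t : Set X) :
    frontier (s \ t) ⊆ frontier s ∪ frontier t :=
  (frontier_inter_subset s tᶜ).trans
    (union_subset_union inter_subset_left (frontier_compl t ▸ inter_subset_right))

theorem frontier_sdiff_closure_subset {X : Type*} [TopologicalSpace X] {Ω D : Set X} :
    frontier (Ω \ closure D) ⊆ frontier Ω ∪ closure D :=
  (frontier_sdiff_subset _ _).trans (union_subset_union_right _ isClosed_closure.frontier_subset)

theorem IsStrictLocalMaxOn.mono {g : E → ℝ} {s t : Set E} {x : E} (h : IsStrictLocalMaxOn g s x)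
    (hts : t ⊆ s) : IsStrictLocalMaxOn g t x :=
  let ⟨r, hr, h⟩ := h
  ⟨r, hr, fun y hy => h y ⟨hy.1, hts hy.2⟩⟩

theorem IsStrictLocalMinOn.mono {g : E → ℝ} {s t : Set E} {x : E} (h : IsStrictLocalMinOn g s x)
    (hts : t ⊆ s) : IsStrictLocalMinOn g t x :=
  let ⟨r, hr, h⟩ := h
  ⟨r, hr, fun y hy => h y ⟨hy.1, hts hy.2⟩⟩

theorem IsStrictLocalMaxOn.isLocalMax {g : E → ℝ} {s : Set E} {x : E}
    (h : IsStrictLocalMaxOn g s x) (hs : s ∈ 𝓝 x) : IsLocalMax g x := by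
  obtain ⟨r, hr, h⟩ := h
  filter_upwards [ball_mem_nhds x hr, hs] with y hyr hys
  rcases eq_or_ne y x with rfl | hyx
  · exact le_rfl
  · exact (h y ⟨hyr, hys⟩ hyx).le

theorem IsStrictLocalMinOn.isLocalMin {g : E → ℝ} {s : Set E} {x : E}
    (h : IsStrictLocalMinOn g s x) (hs : s ∈ 𝓝 x) : IsLocalMin g x := by
  obtain ⟨r, hr, h⟩ := h
  filter_upwards [ball_mem_nhds x hr, hs] with y hyr hys
  rcases eq_or_ne y x with rfl | hyx
  · exact le_rfl
  · exact (h y ⟨hyr, hys⟩ hyx).le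

-- `IsInfHarmonic V u` unfolds to `IsInfSubharmonic V u ∧ IsInfSuperharmonic V u`.
def IsInfSubharmonic (V : Set E) (u : E → ℝ) : Prop :=
  ∀ x ∈ V, ∀ φ : E → ℝ, ContDiffOn ℝ 2 φ V →
    IsStrictLocalMaxOn (fun y => u y - φ y) V x → 0 ≤ infLap φ x

def IsInfSuperharmonic (V : Set E) (u : E → ℝ) : Prop :=
  ∀ x ∈ V, ∀ φ : E → ℝ, ContDiffOn ℝ 2 φ V →
    IsStrictLocalMinOn (fun y => u y - φ y) V x → infLap φ x ≤ 0

theorem IsInfSubharmonic.neg {V : Set E} {u : E → ℝ} (hu : IsInfSubharmonic V u) :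
    IsInfSuperharmonic V (fun z => -u z) := by
  intro x hx φ hφ ⟨r, hr, hmin⟩
  have hmax : IsStrictLocalMaxOn (fun y => u y - -φ y) V x :=
    ⟨r, hr, fun y hy hyx => by linarith [hmin y hy hyx]⟩
  linarith [infLap_neg φ x ▸ hu x hx (fun z => -φ z) hφ.neg hmax]

theorem IsInfSuperharmonic.not_isMinOn_sub {U : Set E} {v : E → ℝ} (hv : IsInfSuperharmonic U v)
    {x y : E} (hx : x ∈ U) (hy : y ∉ U) {c α δ : ℝ} (hδ : 0 < δ) (hδα : 2 * δ * ‖x - y‖ ≠ α) :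
    ¬ IsMinOn (fun z => v z - (c - α * ‖z - y‖ + δ * ‖z - y‖ ^ 2)) U x := by
  intro hmin
  -- The quadratic term makes the cone a strict classical subsolution,
  -- `Δ∞ φ(x) = δ (2δ‖x - y‖ - α)² > 0`; the term `-(δ/2)‖z - x‖²` makes the touching strict.
  set φ : E → ℝ := fun z => c + -α * ‖z - y‖ + δ * ‖z - y‖ ^ 2 + -(δ / 2) * ‖z - x‖ ^ 2
  have hφ : ContDiffOn ℝ 2 φ U := fun z hz =>
    (contDiffAt_radialQuadratic (ne_of_mem_of_not_mem hz hy) _ _ _ _).contDiffWithinAt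
  have hstrict : IsStrictLocalMinOn (fun z => v z - φ z) U x := by
    refine ⟨1, one_pos, fun z hz hzx => ?_⟩
    have h1 : v x - (c - α * ‖x - y‖ + δ * ‖x - y‖ ^ 2)
        ≤ v z - (c - α * ‖z - y‖ + δ * ‖z - y‖ ^ 2) := hmin hz.2
    have h2 : 0 < δ / 2 * ‖z - x‖ ^ 2 := by
      have := norm_pos_iff.2 (sub_ne_zero.2 hzx)
      positivity
    simp only [φ, sub_self, norm_zero]
    linarith
  have h := hv x hx φ hφ hstrict
  rw [infLap_radialQuadratic (ne_of_mem_of_not_mem hx hy)] at h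
  have hne : -α + 2 * δ * ‖x - y‖ ≠ 0 := fun h0 => hδα (by linarith)
  have : 0 < (-α + 2 * δ * ‖x - y‖) ^ 2 := by positivity
  nlinarith

theorem IsInfSuperharmonic.cone_le {U : Set E} (hU : Bornology.IsBounded U) {v : E → ℝ}
    (hvc : ContinuousOn v (closure U)) (hv : IsInfSuperharmonic U v) {y : E} (hy : y ∉ U)
    {c α : ℝ} (hα : 0 ≤ α) (hb : ∀ z ∈ frontier U, c - α * ‖z - y‖ ≤ v z) :
    ∀ z ∈ closure U, c - α * ‖z - y‖ ≤ v z := by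
  by_contra! hcon
  obtain ⟨z₀, hz₀, hlt⟩ := hcon
  obtain ⟨R, hR⟩ := hU.closure.subset_closedBall y
  have hRz : ∀ z ∈ closure U, ‖z - y‖ ≤ R := fun z hz => by simpa [dist_eq_norm] using hR hz
  set m := c - α * ‖z₀ - y‖ - v z₀ with hm_def
  have hm : 0 < m := by linarith
  -- `δ` is so small that the minimum of `v` minus the perturbed cone cannot lie on
  -- `frontier U`, and that `2δ‖z - y‖ ≠ α` on `closure U`.
  have hsmall : ∀ {k : ℝ} (C : ℝ), 0 < C → ∀ᶠ δ in 𝓝 (0 : ℝ), δ * k < C := fun {k} C hC =>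
    ((continuous_mul_const k).tendsto' 0 0 (zero_mul k)).eventually (gt_mem_nhds hC)
  have hα' : ∀ᶠ δ in 𝓝 (0 : ℝ), 0 < α → δ * (2 * R) < α := by
    by_cases hα0 : 0 < α
    · exact (hsmall α hα0).mono fun δ hδ _ => hδ
    · exact Eventually.of_forall fun δ h => absurd h hα0
  obtain ⟨δ, ⟨hδm, hδα⟩, hδ⟩ :=
    ((((hsmall (k := R ^ 2) m hm).and hα').filter_mono nhdsWithin_le_nhds).and
      (self_mem_nhdsWithin (s := Ioi 0))).exists
  set G : E → ℝ := fun z => v z - (c - α * ‖z - y‖ + δ * ‖z - y‖ ^ 2)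
  have hGc : ContinuousOn G (closure U) := hvc.sub (by fun_prop)
  obtain ⟨zs, hzs, hmin⟩ := hU.isCompact_closure.exists_isMinOn ⟨z₀, hz₀⟩ hGc
  have hzsU : zs ∈ U := by
    rcases (closure_eq_self_union_frontier U ▸ hzs : zs ∈ U ∪ frontier U) with h | h
    · exact h
    · have h1 : G zs ≤ G z₀ := hmin hz₀
      have h2 : δ * ‖zs - y‖ ^ 2 ≤ δ * R ^ 2 :=
        mul_le_mul_of_nonneg_left (pow_le_pow_left₀ (norm_nonneg _) (hRz zs hzs) 2) hδ.le
      have h3 : 0 ≤ δ * ‖z₀ - y‖ ^ 2 := by positivity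
      simp only [G] at h1
      linarith [hb zs h]
  refine hv.not_isMinOn_sub hzsU hy hδ ?_ (hmin.on_subset subset_closure)
  rcases hα.eq_or_lt with rfl | hpos
  · have : 0 < ‖zs - y‖ := norm_pos_iff.2 (sub_ne_zero.2 (ne_of_mem_of_not_mem hzsU hy))
    exact (by positivity : (0 : ℝ) < 2 * δ * ‖zs - y‖).ne'
  · have : 2 * δ * ‖zs - y‖ ≤ δ * (2 * R) := by nlinarith [hRz zs hzs]
    exact (this.trans_lt (hδα hpos)).ne

theorem IsInfSubharmonic.le_cone {U : Set E} (hU : Bornology.IsBounded U) {v : E → ℝ}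
    (hvc : ContinuousOn v (closure U)) (hv : IsInfSubharmonic U v) {y : E} (hy : y ∉ U)
    {c α : ℝ} (hα : 0 ≤ α) (hb : ∀ z ∈ frontier U, v z ≤ c + α * ‖z - y‖) :
    ∀ z ∈ closure U, v z ≤ c + α * ‖z - y‖ := fun z hz => by
  linarith [hv.neg.cone_le (v := fun z => -v z) hU hvc.neg hy (c := -c) hα
    (fun z hz => show -c - α * ‖z - y‖ ≤ -v z by linarith [hb z hz]) z hz]

theorem IsInfSuperharmonic.coneSup_le {U K : Set E} (hU : Bornology.IsBounded U) {v : E → ℝ}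
    (hvc : ContinuousOn v (closure U)) (hv : IsInfSuperharmonic U v) (hK : IsCompact K)
    (hKne : K.Nonempty) (hKU : Disjoint K U) {f : E → ℝ} (hf : ContinuousOn f K) {α : ℝ}
    (hα : 0 ≤ α) (hb : ∀ z ∈ frontier U, coneSup K f α z ≤ v z) :
    ∀ z ∈ closure U, coneSup K f α z ≤ v z := fun z hz =>
  _root_.coneSup_le hKne fun y hy => by
    refine dist_eq_norm z y ▸
      hv.cone_le hU hvc (hKU.notMem_of_mem_left hy) hα (fun z' hz' => ?_) z hz
    exact (dist_eq_norm z' y ▸ le_coneSup hK hf hy).trans (hb z' hz')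

theorem isGCsub_of_cone_le {Ω D : Set E} {v : E → ℝ} (hΩ : IsOpen Ω) (hint : interior D = ∅)
    (hv : IsInfSubharmonic (Ω \ closure D) v)
    (hcone : ∀ x ∈ Ω ∩ closure D, ∃ y ≠ x, ∃ c a : ℝ,
      (∀ᶠ z in 𝓝 x, c + a * ‖z - y‖ ≤ v z) ∧ c + a * ‖x - y‖ = v x) :
    IsGCsub Ω D v := by
  intro x hx φ hφ hmax
  refine ⟨?_, by simp [chi, hint]⟩
  by_cases hxD : x ∈ closure D
  · obtain ⟨y, hyx, c, a, hle, heq⟩ := hcone x ⟨hx, hxD⟩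
    have hmin : IsLocalMin (fun z => φ z - (c + a * ‖z - y‖)) x := by
      filter_upwards [hmax.isLocalMax (hΩ.mem_nhds hx), hle] with z hz hcz
      linarith
    rw [← infLap_cone hyx.symm c a]
    exact infLap_le_of_isLocalMin_sub (hφ.contDiffAt (hΩ.mem_nhds hx))
      (by simpa using contDiffAt_radialQuadratic (x := x) hyx.symm c a 0 0) hmin
  · exact hv x ⟨hx, hxD⟩ φ (hφ.mono sdiff_subset) (hmax.mono sdiff_subset)

theorem isGCsuper_of_le_add_norm {Ω D : Set E} {v : E → ℝ} (hΩ : IsOpen Ω)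
    (hv : IsInfSuperharmonic (Ω \ closure D) v)
    (hlip : ∀ x ∈ Ω ∩ closure D, ∀ᶠ z in 𝓝 x, v z ≤ v x + ‖z - x‖) :
    IsGCsuper Ω D v := by
  intro x hx φ hφ hmin
  by_cases hxD : x ∈ closure D
  · right
    have hb : ∀ᶠ z in 𝓝 x, φ z - φ x ≤ 1 * ‖z - x‖ := by
      filter_upwards [hmin.isLocalMin (hΩ.mem_nhds hx), hlip x ⟨hx, hxD⟩] with z hz hvz
      linarith
    simpa [chi, hxD] using norm_gradient_le_of_sub_le zero_le_one
      ((hφ.contDiffAt (hΩ.mem_nhds hx)).differentiableAt (by norm_num)) hb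
  · exact .inl (hv x ⟨hx, hxD⟩ φ (hφ.mono sdiff_subset) (hmin.mono sdiff_subset))

theorem coneSup_le_of_isInfSuperharmonic {Ω D : Set E} {f v : E → ℝ} {α : ℝ} (hΩo : IsOpen Ω)
    (hΩb : Bornology.IsBounded Ω) (hK : IsCompact (frontier Ω)) (hKne : (frontier Ω).Nonempty)
    (hf : ContinuousOn f (frontier Ω)) (hα : 0 ≤ α) (hvc : ContinuousOn v (closure Ω))
    (hv : IsInfSuperharmonic (Ω \ closure D) v)
    (hvw : ∀ z ∈ frontier Ω ∪ closure D, v z = coneSup (frontier Ω) f α z) :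
    ∀ z ∈ Ω, coneSup (frontier Ω) f α z ≤ v z := fun z hz => by
  by_cases hzD : z ∈ closure D
  · exact (hvw z (.inr hzD)).ge
  · exact hv.coneSup_le (hΩb.subset sdiff_subset) (hvc.mono (closure_mono sdiff_subset)) hK hKne
      ((disjoint_frontier_iff_isOpen.mpr hΩo).mono_right sdiff_subset) hf hα
      (fun z' hz' => (hvw z' (frontier_sdiff_closure_subset hz')).ge) z
      (subset_closure ⟨hz, hzD⟩)

theorem le_add_norm_of_isInfSubharmonic {Ω D : Set E} {f v : E → ℝ} {α : ℝ}
    (hΩb : Bornology.IsBounded Ω) (hK : IsCompact (frontier Ω)) (hKne : (frontier Ω).Nonempty)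
    (hf : ContinuousOn f (frontier Ω)) (hα : 0 ≤ α) (hvc : ContinuousOn v (closure Ω))
    (hv : IsInfSubharmonic (Ω \ closure D) v)
    (hvw : ∀ z ∈ frontier Ω ∪ closure D, v z = coneSup (frontier Ω) f α z) :
    ∀ x ∈ closure D, ∀ z ∈ Ω, v z ≤ v x + α * ‖z - x‖ := fun x hx z hz => by
  have hw : ∀ z ∈ frontier Ω ∪ closure D, v z ≤ v x + α * ‖z - x‖ := fun z hz => by
    rw [hvw z hz, hvw x (.inr hx), ← dist_eq_norm]
    exact coneSup_le_add hK hKne hf hα x z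
  by_cases hzD : z ∈ closure D
  · exact hw z (.inr hzD)
  · exact hv.le_cone (hΩb.subset sdiff_subset) (hvc.mono (closure_mono sdiff_subset))
      (fun h => h.2 hx) hα (fun z' hz' => hw z' (frontier_sdiff_closure_subset hz'))
      z (subset_closure ⟨hz, hzD⟩)

theorem exists_cone_touch_of_coneSup_le {Ω K : Set E} (hΩo : IsOpen Ω) (hKΩ : Disjoint K Ω)
    (hK : IsCompact K) (hKne : K.Nonempty) {f v : E → ℝ} (hf : ContinuousOn f K) {α : ℝ}
    (hwv : ∀ z ∈ Ω, coneSup K f α z ≤ v z) {x : E} (hx : x ∈ Ω) (hvx : v x = coneSup K f α x) :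
    ∃ y ≠ x, ∃ c a : ℝ, (∀ᶠ z in 𝓝 x, c + a * ‖z - y‖ ≤ v z) ∧ c + a * ‖x - y‖ = v x := by
  obtain ⟨y, hy, hxy⟩ := exists_coneSup_eq hK hKne hf (α := α) x
  refine ⟨y, fun h => hKΩ.notMem_of_mem_left hy (h ▸ hx), f y, -α, ?_, ?_⟩
  · filter_upwards [hΩo.mem_nhds hx] with z hz
    linarith [dist_eq_norm z y ▸ le_coneSup (α := α) hK hf hy (x := z), hwv z hz]
  · rw [hvx, hxy, dist_eq_norm]
    ring

theorem stmt_5_general (hn : 1 ≤ n) (Ω D : Set E) (hΩo : IsOpen Ω) (hΩne : Ω.Nonempty)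
    (hΩb : Bornology.IsBounded Ω)
    (hint : interior D = ∅)
    (f : E → ℝ) (L : ℝ) (hL0 : 0 ≤ L)
    (hf : LipschitzOnWith (Real.toNNReal L) f (frontier Ω))
    (α : ℝ) (hα : α ∈ Set.Icc L 1)
    (v : E → ℝ) (hvc : ContinuousOn v (closure Ω))
    (hvharm : IsInfHarmonic (Ω \ closure D) v)
    (hvf : ∀ x ∈ frontier Ω, v x = f x)
    (hvD : ∀ x ∈ closure D, v x = sSup ((fun y => f y - α * dist x y) '' frontier Ω)) :
    IsGCsol Ω D f v := by
  have : Nonempty (Fin n) := ⟨⟨0, hn⟩⟩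
  have hα0 : 0 ≤ α := hL0.trans hα.1
  have hfα : LipschitzOnWith (Real.toNNReal α) f (frontier Ω) :=
    hf.weaken (Real.toNNReal_le_toNNReal hα.1)
  have hK : IsCompact (frontier Ω) :=
    hΩb.isCompact_closure.of_isClosed_subset isClosed_frontier frontier_subset_closure
  have hKne : (frontier Ω).Nonempty :=
    nonempty_frontier_iff.mpr ⟨hΩne, fun h => NormedSpace.unbounded_univ ℝ E (h ▸ hΩb)⟩
  have hvw : ∀ z ∈ frontier Ω ∪ closure D, v z = coneSup (frontier Ω) f α z := by
    rintro z (hz | hz)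
    · rw [hvf z hz, coneSup_eq_of_mem hfα hα0 hz]
    · exact hvD z hz
  refine ⟨hvc, isGCsub_of_cone_le hΩo hint hvharm.1 fun x hx => ?_,
    isGCsuper_of_le_add_norm hΩo hvharm.2 fun x hx => ?_, hvf⟩
  · exact exists_cone_touch_of_coneSup_le hΩo (disjoint_frontier_iff_isOpen.mpr hΩo) hK hKne
      hfα.continuousOn (coneSup_le_of_isInfSuperharmonic hΩo hΩb hK hKne hfα.continuousOn hα0 hvc
        hvharm.2 hvw) hx.1 (hvw x (.inr hx.2))
  · filter_upwards [hΩo.mem_nhds hx.1] with z hz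
    nlinarith [le_add_norm_of_isInfSubharmonic hΩb hK hKne hfα.continuousOn hα0 hvc hvharm.1 hvw
      x hx.2 z hz, norm_nonneg (z - x), hα.2]

/-- when int D = ∅ and Lip(f) = L ≤ 1, each v_α is a solution of (GC). -/
theorem stmt_5 (hn : 1 ≤ n) (Ω D : Set E) (hΩo : IsOpen Ω) (hΩne : Ω.Nonempty)
    (hΩb : Bornology.IsBounded Ω) (hD : D ⊆ Ω)
    (hint : interior D = ∅)
    (f : E → ℝ) (L : ℝ) (hL0 : 0 ≤ L) (hL1 : L ≤ 1)
    (hf : LipschitzOnWith (Real.toNNReal L) f (frontier Ω))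
    (α : ℝ) (hα : α ∈ Set.Icc L 1)
    (v : E → ℝ) (hvc : ContinuousOn v (closure Ω))
    (hvharm : IsInfHarmonic (Ω \ closure D) v)
    (hvf : ∀ x ∈ frontier Ω, v x = f x)
    (hvD : ∀ x ∈ closure D, v x = sSup ((fun y => f y - α * dist x y) '' frontier Ω)) :
    IsGCsol Ω D f v :=
  stmt_5_general hn Ω D hΩo hΩne hΩb hint f L hL0 hf α hα v hvc hvharm hvf hvD

end
end

section
/- Let ε > 0, let F : Γ_ε → ℝ be Lipschitz continuous with Lipschitz constant Lip(F), and let u : Ω ∪ Γ_ε → ℝ be a bounded function that satisfies the D-game dynamic programming principle in Ω and u = F on Γ_ε. Then for every x ∈ Ω one has sup_{cl B_ε(x)} u − inf_{cl B_ε(x)} u ≤ 4 max{Lip(F), 1} · ε. -/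
open Metric Set Filter MeasureTheory
open scoped Topology RealInnerProductSpace NNReal

noncomputable section

variable {n : ℕ}

local notation "E" => EuclideanSpace ℝ (Fin n)

/-!
Suppose `sup_B u - u x > C ε` at some `x ∈ Ω`, where `C = max (Lip F) 1`. The upper half of the
DPP, `u ≤ (sup + inf) / 2`, lets us move to a point of the ball where `u` is larger by more than
`C ε` while keeping the gap `sup - u > C ε`; since `u` is bounded, this walk reaches the strip
`Γ_ε` at some `w`, from a last interior point `z`. At `z` the gap exceeds `ε`, so the lower half
of the DPP forces `u z - inf_B u > C ε`, and the symmetric downward walk from `z` reaches a point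
`w' ∈ Γ_ε` with `u z - u w' > C · dist w' z`. Then `u w - u w' > C · dist w w'`, contradicting the
Lipschitz bound of `F = u` on `Γ_ε`. Hence `sup_B u - u ≤ C ε`, and by the upper half of the DPP
again the oscillation on the ball is at most `2 C ε`.
-/

theorem exists_stop_of_uniform_ascent {α : Type*} {s : Set α} {f : α → ℝ} {M δ : ℝ}
    (hδ : 0 < δ) (hM : ∀ x ∈ s, f x ≤ M) {P Q : α → Prop}
    (hstep : ∀ x ∈ s, P x → ¬ Q x → ∃ y ∈ s, P y ∧ f x + δ ≤ f y)
    {x : α} (hx : x ∈ s) (hPx : P x) : ∃ z ∈ s, P z ∧ Q z := by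
  by_contra! hstop
  have hclimb : ∀ k : ℕ, ∃ y ∈ s, P y ∧ f x + k * δ ≤ f y := by
    intro k
    induction k with
    | zero => exact ⟨x, hx, hPx, by simp⟩
    | succ k ih =>
      obtain ⟨y, hy, hPy, hfy⟩ := ih
      obtain ⟨y', hy', hPy', hfy'⟩ := hstep y hy hPy (hstop y hy hPy)
      exact ⟨y', hy', hPy', by push_cast; linarith⟩
  obtain ⟨k, hk⟩ := exists_nat_gt ((M - f x) / δ)
  obtain ⟨y, hy, -, hfy⟩ := hclimb k
  linarith [(div_lt_iff₀ hδ).mp hk, hM y hy]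

section Walks

variable {X : Type*} [PseudoMetricSpace X] {Ω Γ : Set X} {ε δ C M : ℝ} {u : X → ℝ}

theorem bddAbove_image_closedBall {x : X} (hball : closedBall x ε ⊆ Ω ∪ Γ)
    (hM : ∀ y ∈ Ω ∪ Γ, |u y| ≤ M) : BddAbove (u '' closedBall x ε) :=
  ⟨M, by rintro _ ⟨y, hy, rfl⟩; exact (abs_le.mp (hM y (hball hy))).2⟩

theorem bddBelow_image_closedBall {x : X} (hball : closedBall x ε ⊆ Ω ∪ Γ)
    (hM : ∀ y ∈ Ω ∪ Γ, |u y| ≤ M) : BddBelow (u '' closedBall x ε) :=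
  ⟨-M, by rintro _ ⟨y, hy, rfl⟩; exact (abs_le.mp (hM y (hball hy))).1⟩

theorem exists_mem_strip_of_lt_sSup_sub (hε : 0 ≤ ε) (hδ : 0 < δ)
    (hball : ∀ x ∈ Ω, closedBall x ε ⊆ Ω ∪ Γ) (hM : ∀ x ∈ Ω ∪ Γ, |u x| ≤ M)
    (hmid : ∀ x ∈ Ω,
      u x ≤ (sSup (u '' closedBall x ε) + sInf (u '' closedBall x ε)) / 2)
    {x : X} (hx : x ∈ Ω) (hgap : δ < sSup (u '' closedBall x ε) - u x) :
    ∃ z ∈ Ω, δ < sSup (u '' closedBall z ε) - u z ∧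
      ∃ w ∈ Γ, dist w z ≤ ε ∧ δ < u w - u z := by
  refine exists_stop_of_uniform_ascent hδ (fun y hy => (abs_le.mp (hM y (Or.inl hy))).2)
    ?_ hx hgap
  intro y hy hgapy hstop
  obtain ⟨_, ⟨y', hy', rfl⟩, hlt⟩ := exists_lt_of_lt_csSup
    ((nonempty_closedBall.mpr hε).image u)
    (show u y + δ < sSup (u '' closedBall y ε) by linarith)
  rcases hball y hy hy' with hy'Ω | hy'Γ
  · have hinf : sInf (u '' closedBall y' ε) ≤ u y :=
      csInf_le (bddBelow_image_closedBall (hball y' hy'Ω) hM)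
        (mem_image_of_mem u (mem_closedBall_comm.mp hy'))
    exact ⟨y', hy'Ω, by linarith [hmid y' hy'Ω], hlt.le⟩
  · exact absurd ⟨y', hy'Γ, mem_closedBall.mp hy', by linarith⟩ hstop

theorem exists_mem_strip_of_lt_sub_sInf (hε : 0 < ε) (hC : 1 ≤ C)
    (hball : ∀ x ∈ Ω, closedBall x ε ⊆ Ω ∪ Γ) (hM : ∀ x ∈ Ω ∪ Γ, |u x| ≤ M)
    (hlow : ∀ x ∈ Ω, min ((sSup (u '' closedBall x ε) + sInf (u '' closedBall x ε)) / 2)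
      (sSup (u '' closedBall x ε) - ε) ≤ u x)
    {z : X} (hz : z ∈ Ω) (hgap : C * ε < u z - sInf (u '' closedBall z ε)) :
    ∃ w ∈ Γ, C * dist w z < u z - u w := by
  have hεC : ε ≤ C * ε := le_mul_of_one_le_left hε.le hC
  have hstep : ∀ y ∈ Ω,
      C * ε < u y - sInf (u '' closedBall y ε) ∧ C * dist y z ≤ u z - u y →
      ¬ (∃ w ∈ Γ, dist w y ≤ ε ∧ C * ε < u y - u w) →
      ∃ y' ∈ Ω, (C * ε < u y' - sInf (u '' closedBall y' ε) ∧ C * dist y' z ≤ u z - u y') ∧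
        -u y + C * ε ≤ -u y' := by
    rintro y hy ⟨hgapy, hyz⟩ hstop
    obtain ⟨_, ⟨y', hy', rfl⟩, hlt⟩ := exists_lt_of_csInf_lt
      ((nonempty_closedBall.mpr hε.le).image u)
      (show sInf (u '' closedBall y ε) < u y - C * ε by linarith)
    have hy'y : dist y' y ≤ ε := mem_closedBall.mp hy'
    rcases hball y hy hy' with hy'Ω | hy'Γ
    · have hsup : u y ≤ sSup (u '' closedBall y' ε) :=
        le_csSup (bddAbove_image_closedBall (hball y' hy'Ω) hM)
          (mem_image_of_mem u (mem_closedBall_comm.mp hy'))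
      have hy'z : C * dist y' z ≤ C * ε + C * dist y z := by
        rw [← mul_add]; gcongr; linarith [dist_triangle y' y z]
      rcases min_le_iff.mp (hlow y' hy'Ω) with hmid | hsub
      · exact ⟨y', hy'Ω, ⟨by linarith, by linarith⟩, by linarith⟩
      · linarith
    · exact absurd ⟨y', hy'Γ, hy'y, by linarith⟩ hstop
  obtain ⟨y, -, ⟨-, hyz⟩, w, hw, hwy, hdrop⟩ :=
    exists_stop_of_uniform_ascent (f := fun y => -u y) (by positivity : 0 < C * ε)
      (fun y hy => neg_le.mpr (abs_le.mp (hM y (Or.inl hy))).1) hstep hz ⟨hgap, by simp⟩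
  have : C * dist w z ≤ C * ε + C * dist y z := by
    rw [← mul_add]; gcongr; linarith [dist_triangle w y z]
  exact ⟨w, hw, by linarith⟩

theorem sSup_sub_sInf_image_closedBall_le (hε : 0 < ε)
    (hball : ∀ x ∈ Ω, closedBall x ε ⊆ Ω ∪ Γ) (hM : ∀ x ∈ Ω ∪ Γ, |u x| ≤ M)
    (hmid : ∀ x ∈ Ω,
      u x ≤ (sSup (u '' closedBall x ε) + sInf (u '' closedBall x ε)) / 2)
    (hlow : ∀ x ∈ Ω, min ((sSup (u '' closedBall x ε) + sInf (u '' closedBall x ε)) / 2)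
      (sSup (u '' closedBall x ε) - ε) ≤ u x)
    {K : ℝ≥0} (hK : LipschitzOnWith K u Γ) {x : X} (hx : x ∈ Ω) :
    sSup (u '' closedBall x ε) - sInf (u '' closedBall x ε) ≤ 2 * max (K : ℝ) 1 * ε := by
  set C := max (K : ℝ) 1
  have hC : 1 ≤ C := le_max_right _ _
  have hεC : ε ≤ C * ε := le_mul_of_one_le_left hε.le hC
  suffices sSup (u '' closedBall x ε) - u x ≤ C * ε by linarith [hmid x hx]
  by_contra! hgap
  obtain ⟨z, hz, hgapz, w, hw, hwz, hjump⟩ :=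
    exists_mem_strip_of_lt_sSup_sub hε.le (by positivity) hball hM hmid hx hgap
  have hgapz' : C * ε < u z - sInf (u '' closedBall z ε) := by
    rcases min_le_iff.mp (hlow z hz) with h | h <;> linarith
  obtain ⟨w', hw', hdrop⟩ := exists_mem_strip_of_lt_sub_sInf hε hC hball hM hlow hz hgapz'
  have hlip : u w - u w' ≤ C * dist w w' :=
    (le_abs_self _).trans <| (Real.dist_eq _ _).ge.trans <|
      (hK.dist_le_mul w hw w' hw').trans (by gcongr; exact le_max_left _ _)
  have : C * dist w w' ≤ C * ε + C * dist w' z := by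
    rw [← mul_add]; gcongr; linarith [dist_triangle w z w', dist_comm z w']
  linarith

end Walks

theorem exists_mem_segment_frontier {X : Type*} [NormedAddCommGroup X] [NormedSpace ℝ X]
    {Ω : Set X} (hΩ : IsOpen Ω) {x y : X} (hx : x ∈ Ω) (hy : y ∉ Ω) :
    ∃ z ∈ segment ℝ x y, z ∈ frontier Ω := by
  by_contra! h
  refine hy ((convex_segment x y).isPreconnected.subset_of_closure_inter_subset hΩ
    ⟨x, left_mem_segment ℝ x y, hx⟩ ?_ (right_mem_segment ℝ x y))
  rintro z ⟨hzc, hzs⟩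
  by_contra hzΩ
  exact h z hzs ⟨hzc, by rwa [hΩ.interior_eq]⟩

theorem infDist_frontier_lt_dist {X : Type*} [NormedAddCommGroup X] [NormedSpace ℝ X]
    {Ω : Set X} (hΩ : IsOpen Ω) {x y : X} (hx : x ∈ Ω) (hy : y ∉ Ω) :
    infDist y (frontier Ω) < dist y x := by
  obtain ⟨z, hzs, hzf⟩ := exists_mem_segment_frontier hΩ hx hy
  have hzx : 0 < dist x z :=
    dist_pos.mpr fun h => (h ▸ hzf).2 (hΩ.interior_eq.symm ▸ hx)
  calc infDist y (frontier Ω) ≤ dist y z := infDist_le_dist_of_mem hzf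
    _ < dist y x := by
      linarith [dist_add_dist_of_mem_segment hzs, dist_comm y z, dist_comm y x]

theorem closedBall_subset_union_gammaStrip {Ω : Set E} (hΩ : IsOpen Ω) {ε : ℝ} {x : E}
    (hx : x ∈ Ω) : closedBall x ε ⊆ Ω ∪ GammaStrip Ω ε := by
  intro y hy
  by_cases hyΩ : y ∈ Ω
  · exact Or.inl hyΩ
  · exact Or.inr ⟨hyΩ, (infDist_frontier_lt_dist hΩ hx hyΩ).trans_le (mem_closedBall.mp hy)⟩

theorem chi_le_one (S : Set E) (x : E) : chi S x ≤ 1 :=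
  indicator_apply_le' (fun _ => le_rfl) fun _ => zero_le_one

namespace SatisfiesDPP_D

theorem le_midpoint {Ω D : Set E} {ε : ℝ} {u : E → ℝ} (h : SatisfiesDPP_D Ω D ε u)
    {x : E} (hx : x ∈ Ω) :
    u x ≤ (sSup (u '' closedBall x ε) + sInf (u '' closedBall x ε)) / 2 :=
  (h x hx).trans_le (min_le_left _ _)

theorem min_le {Ω D : Set E} {ε : ℝ} {u : E → ℝ} (h : SatisfiesDPP_D Ω D ε u) (hε : 0 ≤ ε)
    {x : E} (hx : x ∈ Ω) :
    min ((sSup (u '' closedBall x ε) + sInf (u '' closedBall x ε)) / 2)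
      (sSup (u '' closedBall x ε) - ε) ≤ u x := by
  rw [h x hx]
  gcongr
  exact mul_le_of_le_one_right hε (chi_le_one D x)

end SatisfiesDPP_D

theorem stmt_11_general (Ω D : Set E) (hΩo : IsOpen Ω)
    (ε : ℝ) (hε : 0 < ε)
    (F : E → ℝ) (K : ℝ)
    (hF : LipschitzOnWith (Real.toNNReal K) F (GammaStrip Ω ε))
    (u : E → ℝ) (M : ℝ) (hub : ∀ x ∈ Ω ∪ GammaStrip Ω ε, |u x| ≤ M)
    (hdpp : SatisfiesDPP_D Ω D ε u)
    (huF : ∀ x ∈ GammaStrip Ω ε, u x = F x) :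
    ∀ x ∈ Ω, sSup (u '' closedBall x ε) - sInf (u '' closedBall x ε) ≤
      4 * max K 1 * ε := by
  intro x hx
  have hlip : LipschitzOnWith (Real.toNNReal K) u (GammaStrip Ω ε) := by
    intro w hw w' hw'
    rw [huF w hw, huF w' hw']
    exact hF hw hw'
  have hosc := sSup_sub_sInf_image_closedBall_le hε
    (fun _ hy => closedBall_subset_union_gammaStrip hΩo hy) hub
    (fun _ hy => hdpp.le_midpoint hy) (fun _ hy => hdpp.min_le hε.le hy) hlip hx
  rw [Real.coe_toNNReal', max_assoc, max_eq_right zero_le_one] at hosc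
  have : 0 ≤ max K 1 * ε := by positivity
  linarith

/-- oscillation estimate for bounded functions satisfying the D-game DPP. -/
theorem stmt_11 (hn : 1 ≤ n) (Ω D : Set E) (hΩo : IsOpen Ω) (hΩne : Ω.Nonempty)
    (hΩb : Bornology.IsBounded Ω) (hD : D ⊆ Ω)
    (ε : ℝ) (hε : 0 < ε)
    (F : E → ℝ) (K : ℝ) (hK : 0 ≤ K)
    (hF : LipschitzOnWith (Real.toNNReal K) F (GammaStrip Ω ε))
    (u : E → ℝ) (M : ℝ) (hub : ∀ x ∈ Ω ∪ GammaStrip Ω ε, |u x| ≤ M)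
    (hdpp : SatisfiesDPP_D Ω D ε u)
    (huF : ∀ x ∈ GammaStrip Ω ε, u x = F x) :
    ∀ x ∈ Ω, sSup (u '' closedBall x ε) - sInf (u '' closedBall x ε) ≤
      4 * max K 1 * ε :=
  stmt_11_general Ω D hΩo ε hε F K hF u M hub hdpp huF

end
end
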